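/- Let M be a matroid on a finite linearly ordered set E and let (F'_ε,...,F'_0,F_c,F_0,...,F_ι) be a connected filtration of M. Then each F_k (0 ≤ k ≤ ι) is a flat of M, each F'_k (0 ≤ k ≤ ε) is a union of circuits of M, and F_c is a cyclic flat of M (both a flat and a union of circuits). -/

import Mathlib

namespace AB
open Set

variable {α : Type*}

/-- A circuit of a matroid: a minimal dependent set. -/
def Circuit (M : Matroid α) (C : Set α) : Prop :=
  M.Dep C ∧ ∀ D, D ⊂ C → M.Indep D

/-- A cocircuit: a circuit of the dual matroid. -/
def Cocircuit (M : Matroid α) (C : Set α) : Prop := Circuit M✶ C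

/-- `b` is internally active for the basis `B`: `b ∈ B` and `b` is the minimum of the
fundamental cocircuit `C*(B;b)`, the unique cocircuit contained in `(M.E \ B) ∪ {b}`. -/
def IntActive [LinearOrder α] (M : Matroid α) (B : Set α) (b : α) : Prop :=
  b ∈ B ∧ ∃ C, Cocircuit M C ∧ C ⊆ (M.E \ B) ∪ {b} ∧ b ∈ C ∧ ∀ x ∈ C, b ≤ x

/-- `e` is externally active for the basis `B`: `e ∈ M.E \ B` and `e` is the minimum of the
fundamental circuit `C(B;e)`, the unique circuit contained in `B ∪ {e}`. -/
def ExtActive [LinearOrder α] (M : Matroid α) (B : Set α) (e : α) : Prop :=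
  e ∈ M.E \ B ∧ ∃ C, Circuit M C ∧ C ⊆ B ∪ {e} ∧ e ∈ C ∧ ∀ x ∈ C, e ≤ x

/-- `Int(B)`, the set of internally active elements of `B`. -/
def IntSet [LinearOrder α] (M : Matroid α) (B : Set α) : Set α := {b | IntActive M B b}

/-- `Ext(B)`, the set of externally active elements of `B`. -/
def ExtSet [LinearOrder α] (M : Matroid α) (B : Set α) : Set α := {e | ExtActive M B e}

end AB

open scoped Matroid

namespace AB

/-- The contraction `M / C` of a set in a matroid, defined by duality:
`M / C = (M* restricted to (E \ C))*`. -/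
noncomputable def contract {α : Type*} (M : Matroid α) (C : Set α) : Matroid α :=
  (M✶ ↾ (M.E \ C))✶

/-- A loop: an element of the ground set that is dependent on its own. -/
def Loop {α : Type*} (M : Matroid α) (e : α) : Prop := e ∈ M.E ∧ ¬ M.Indep {e}

/-- A coloop: a loop of the dual matroid. -/
def Coloop {α : Type*} (M : Matroid α) (e : α) : Prop := Loop M✶ e

end AB

namespace AB

/-- The minor `(M|G)/F` of a matroid. -/
noncomputable def minorIC {α : Type*} (M : Matroid α) (G F : Set α) : Matroid α :=
  contract (M ↾ G) F

/-- A connected matroid: nonempty ground set, and any two distinct elements lie in a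
common circuit. -/
def MConnected {α : Type*} (M : Matroid α) : Prop :=
  M.E.Nonempty ∧ ∀ e ∈ M.E, ∀ f ∈ M.E, e = f ∨ ∃ C, Circuit M C ∧ e ∈ C ∧ f ∈ C

/-- The matroid is a single loop. -/
def IsLoopMatroid {α : Type*} (M : Matroid α) : Prop := ∃ e, M.E = {e} ∧ Loop M e

/-- The matroid is a single coloop (isthmus). -/
def IsColoopMatroid {α : Type*} (M : Matroid α) : Prop := ∃ e, M.E = {e} ∧ Coloop M e

/-- `(ε, ι, F', F)` is a connected filtration of the ordered matroid `M`:
a chain `∅ = F'_ε ⊂ ... ⊂ F'_0 = F_c = F_0 ⊂ ... ⊂ F_ι = M.E` such that the minima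
`min (F_k \ F_{k-1})` (for `1 ≤ k ≤ ι`) are increasing in `k`, the minima
`min (F'_{k-1} \ F'_k)` (for `1 ≤ k ≤ ε`) are increasing in `k`, each minor
`(M|F_k)/F_{k-1}` is connected and not a loop, and each minor `(M|F'_{k-1})/F'_k`
is connected and not a coloop. -/
def IsConnFiltration {α : Type*} [LinearOrder α] (M : Matroid α)
    (ε ι : ℕ) (F' F : ℕ → Set α) : Prop :=
  F' ε = ∅ ∧ F' 0 = F 0 ∧ F ι = M.E ∧
  (∀ k, k < ι → F k ⊂ F (k + 1)) ∧
  (∀ k, k < ε → F' (k + 1) ⊂ F' k) ∧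
  (∀ k, k + 1 < ι → ∃ a b, IsLeast (F (k + 1) \ F k) a ∧
    IsLeast (F (k + 2) \ F (k + 1)) b ∧ a < b) ∧
  (∀ k, k + 1 < ε → ∃ a b, IsLeast (F' k \ F' (k + 1)) a ∧
    IsLeast (F' (k + 1) \ F' (k + 2)) b ∧ a < b) ∧
  (∀ k, k < ι → MConnected (minorIC M (F (k + 1)) (F k)) ∧
    ¬ IsLoopMatroid (minorIC M (F (k + 1)) (F k))) ∧
  (∀ k, k < ε → MConnected (minorIC M (F' k) (F' (k + 1))) ∧
    ¬ IsColoopMatroid (minorIC M (F' k) (F' (k + 1))))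

end AB

/- For `F ⊆ G` with `G` a flat, the loops of `(M|G)/F` are the elements of `cl(F) \ F`, so `F` is
a flat once this minor is loopless; dually, an element of `G \ F` that is not a coloop of `(M|G)/F`
is not a coloop of `M|G`, hence lies in a circuit of `M` inside `G`. A connected matroid that is
not a single loop (coloop) has no loops (coloops), since each element shares a circuit with
another one. Descending induction from `F_ι = E` and from `F'_ε = ∅` gives the claims. -/

namespace AB
open Set Matroid

variable {α : Type*} {M N : Matroid α} {C F G X : Set α} {e : α}

lemma circuit_iff_isCircuit : Circuit M C ↔ M.IsCircuit C := by
  rw [isCircuit_iff_forall_ssubset]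
  rfl

lemma loop_iff_isLoop : Loop M e ↔ M.IsLoop e := by
  rw [← singleton_dep, dep_iff, singleton_subset_iff, Loop, and_comm]

lemma coloop_iff_isColoop : Coloop M e ↔ M.IsColoop e :=
  loop_iff_isLoop

lemma minorIC_eq_restrict_contract : minorIC M G F = (M ↾ G) ／ F := rfl

lemma MConnected.eq_singleton_or_exists_isCircuit (hN : MConnected N) (he : e ∈ N.E) :
    N.E = {e} ∨ ∃ C, N.IsCircuit C ∧ e ∈ C ∧ C ≠ {e} := by
  by_cases hE : ∃ f ∈ N.E, f ≠ e
  · obtain ⟨f, hf, hfe⟩ := hE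
    obtain rfl | ⟨C, hC, heC, hfC⟩ := hN.2 e he f hf
    · exact absurd rfl hfe
    · refine .inr ⟨C, circuit_iff_isCircuit.mp hC, heC, fun hCe => hfe ?_⟩
      exact mem_singleton_iff.mp (hCe ▸ hfC)
  · push Not at hE
    exact .inl (eq_singleton_iff_unique_mem.mpr ⟨he, hE⟩)

lemma MConnected.not_isLoop (hN : MConnected N) (hNl : ¬ IsLoopMatroid N) (he : e ∈ N.E) :
    ¬ N.IsLoop e := by
  intro hloop
  obtain hE | ⟨C, hC, heC, hCe⟩ := hN.eq_singleton_or_exists_isCircuit he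
  · exact hNl ⟨e, hE, loop_iff_isLoop.mpr hloop⟩
  · exact hCe (hloop.isCircuit.eq_of_subset_isCircuit hC (singleton_subset_iff.mpr heC)).symm

lemma MConnected.not_isColoop (hN : MConnected N) (hNc : ¬ IsColoopMatroid N) (he : e ∈ N.E) :
    ¬ N.IsColoop e := by
  intro hcoloop
  obtain hE | ⟨C, hC, heC, -⟩ := hN.eq_singleton_or_exists_isCircuit he
  · exact hNc ⟨e, hE, coloop_iff_isColoop.mpr hcoloop⟩
  · exact hC.not_isColoop_of_mem heC hcoloop

lemma isFlat_of_forall_not_isLoop_contract_restrict (hG : M.IsFlat G) (hFG : F ⊆ G)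
    (h : ∀ e ∈ G \ F, ¬ ((M ↾ G) ／ F).IsLoop e) : M.IsFlat F := by
  refine isFlat_iff_closure_eq.mpr
    (subset_antisymm (fun e he => ?_) (M.subset_closure F (hFG.trans hG.subset_ground)))
  by_contra heF
  have heG : e ∈ G := hG.closure ▸ M.closure_subset_closure hFG he
  refine h e ⟨heG, heF⟩ (contract_isLoop_iff_mem_closure.mpr ⟨?_, heF⟩)
  rw [restrict_closure_eq M hFG hG.subset_ground]
  exact ⟨he, heG⟩

lemma exists_isCircuit_of_not_isColoop_contract_restrict (hG : G ⊆ M.E) (he : e ∈ G \ F)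
    (h : ¬ ((M ↾ G) ／ F).IsColoop e) : ∃ C, M.IsCircuit C ∧ e ∈ C ∧ C ⊆ G := by
  have hcoloop : ¬ (M ↾ G).IsColoop e := fun hc => h (contract_isColoop_iff.mpr ⟨hc, he.2⟩)
  obtain ⟨C, hC, heC⟩ := exists_mem_isCircuit_of_not_isColoop he.1 hcoloop
  obtain ⟨hCM, hCG⟩ := (restrict_isCircuit_iff hG).mp hC
  exact ⟨C, hCM, heC, hCG⟩

lemma exists_circuits_sUnion_eq (h : ∀ e ∈ X, ∃ C, M.IsCircuit C ∧ e ∈ C ∧ C ⊆ X) :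
    ∃ S : Set (Set α), (∀ C ∈ S, Circuit M C) ∧ X = ⋃₀ S := by
  refine ⟨{C | M.IsCircuit C ∧ C ⊆ X}, fun C hC => circuit_iff_isCircuit.mpr hC.1, ?_⟩
  refine subset_antisymm (fun e he => ?_) (sUnion_subset fun C hC => hC.2)
  obtain ⟨C, hC, heC, hCX⟩ := h e he
  exact ⟨C, ⟨hC, hCX⟩, heC⟩

section Filtration

variable [LinearOrder α] {ε ι : ℕ} {F' F : ℕ → Set α} {k : ℕ}

lemma IsConnFiltration.isFlat (h : IsConnFiltration M ε ι F' F) (hk : k ≤ ι) :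
    M.IsFlat (F k) := by
  obtain ⟨-, -, hι, hF, -, -, -, hconn, -⟩ := h
  simp only [minorIC_eq_restrict_contract] at hconn
  induction hk using Nat.decreasingInduction with
  | self => exact hι ▸ M.ground_isFlat
  | of_succ k hk ih =>
    exact isFlat_of_forall_not_isLoop_contract_restrict ih (hF k hk).subset
      fun _ he => (hconn k hk).1.not_isLoop (hconn k hk).2 he

lemma IsConnFiltration.F'_subset_ground (h : IsConnFiltration M ε ι F' F) (hk : k ≤ ε) :
    F' k ⊆ M.E := by
  have hF0 := (h.isFlat (Nat.zero_le ι)).subset_ground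
  obtain ⟨-, hF'F, -, -, hF', -⟩ := h
  induction k with
  | zero => exact hF'F ▸ hF0
  | succ k ih => exact (hF' k hk).subset.trans (ih (Nat.le_of_succ_le hk))

lemma IsConnFiltration.exists_isCircuit (h : IsConnFiltration M ε ι F' F) (hk : k ≤ ε) :
    ∀ e ∈ F' k, ∃ C, M.IsCircuit C ∧ e ∈ C ∧ C ⊆ F' k := by
  induction hk using Nat.decreasingInduction with
  | self => simp [h.1]
  | of_succ k hk ih =>
    have hground := h.F'_subset_ground hk.le
    obtain ⟨-, -, -, -, hF', -, -, -, hconn⟩ := h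
    simp only [minorIC_eq_restrict_contract] at hconn
    intro e he
    by_cases he' : e ∈ F' (k + 1)
    · obtain ⟨C, hC, heC, hCF'⟩ := ih e he'
      exact ⟨C, hC, heC, hCF'.trans (hF' k hk).subset⟩
    · exact exists_isCircuit_of_not_isColoop_contract_restrict hground ⟨he, he'⟩
        ((hconn k hk).1.not_isColoop (hconn k hk).2 ⟨he, he'⟩)

end Filtration

end AB

theorem stmt_19_general {α : Type*} [LinearOrder α] (M : Matroid α)
    (ε ι : ℕ) (F' F : ℕ → Set α) (h : AB.IsConnFiltration M ε ι F' F) :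
    (∀ k, k ≤ ι → M.IsFlat (F k)) ∧
    (∀ k, k ≤ ε → ∃ S : Set (Set α), (∀ C ∈ S, AB.Circuit M C) ∧ F' k = ⋃₀ S) ∧
    (M.IsFlat (F 0) ∧ ∃ S : Set (Set α), (∀ C ∈ S, AB.Circuit M C) ∧ F 0 = ⋃₀ S) := by
  have hcyclic : ∀ k, k ≤ ε → ∃ S : Set (Set α), (∀ C ∈ S, AB.Circuit M C) ∧ F' k = ⋃₀ S :=
    fun k hk => AB.exists_circuits_sUnion_eq (h.exists_isCircuit hk)
  refine ⟨fun k hk => h.isFlat hk, hcyclic, h.isFlat (Nat.zero_le ι), ?_⟩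
  exact h.2.1 ▸ hcyclic 0 (Nat.zero_le ε)

/-- In a connected filtration of `M`, each `F_k` is a flat of `M`,
each `F'_k` is a union of circuits of `M`, and `F_c = F_0 = F'_0` is a cyclic flat
(both a flat and a union of circuits). -/
theorem stmt_19 {α : Type*} [LinearOrder α] (M : Matroid α) [M.Finite]
    (ε ι : ℕ) (F' F : ℕ → Set α) (h : AB.IsConnFiltration M ε ι F' F) :
    (∀ k, k ≤ ι → M.IsFlat (F k)) ∧
    (∀ k, k ≤ ε → ∃ S : Set (Set α), (∀ C ∈ S, AB.Circuit M C) ∧ F' k = ⋃₀ S) ∧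
    (M.IsFlat (F 0) ∧ ∃ S : Set (Set α), (∀ C ∈ S, AB.Circuit M C) ∧ F 0 = ⋃₀ S) :=
  stmt_19_general M ε ι F' F h
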